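/- arXiv:1610.03434 — 5 statements merged into one kernel-verified Lean document; each statement's English description precedes it below -/
import Mathlib

section
/- Let f(x) = ((a - x)^2 + b^2)/(c0 + c1·x)^2 with c1 ≠ 0. If c0 + a·c1 = 0 and b ≠ 0, then f does not attain its infimum: the infimum of f over its domain equals 1/c1^2, f(x) > 1/c1^2 for every x in the domain, and f(x) tends to 1/c1^2 as x → ±∞. -/
theorem stmt_2 (a b c0 c1 : ℝ) (hc1 : c1 ≠ 0) (h : c0 + a * c1 = 0) (hb : b ≠ 0) :
    let f : ℝ → ℝ := fun x => ((a - x) ^ 2 + b ^ 2) / (c0 + c1 * x) ^ 2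
    (∀ x : ℝ, x ≠ -c0 / c1 → 1 / c1 ^ 2 < f x) ∧
    IsGLB (f '' {x : ℝ | x ≠ -c0 / c1}) (1 / c1 ^ 2) ∧
    Filter.Tendsto f Filter.atTop (nhds (1 / c1 ^ 2)) ∧
    Filter.Tendsto f Filter.atBot (nhds (1 / c1 ^ 2)) := by
  intro f
  have ha : -c0 / c1 = a := by field_simp; linarith
  have hc1sq : (0:ℝ) < c1 ^ 2 := by positivity
  have hc0 : c0 = -(a * c1) := by linarith
  have hfg : ∀ x : ℝ, x ≠ a → f x = 1 / c1 ^ 2 + b ^ 2 / (c1 * (x - a)) ^ 2 := by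
    intro x hx
    have hxa : x - a ≠ 0 := sub_ne_zero.mpr hx
    have hden : (c0 + c1 * x) ^ 2 = (c1 * (x - a)) ^ 2 := by rw [hc0]; ring
    simp only [f, hden]
    have hne : (c1 * (x - a)) ^ 2 ≠ 0 := by positivity
    field_simp
    ring
  have hgt : ∀ x : ℝ, x ≠ -c0 / c1 → 1 / c1 ^ 2 < f x := by
    intro x hx
    rw [ha] at hx
    rw [hfg x hx]
    have hxa : x - a ≠ 0 := sub_ne_zero.mpr hx
    have : 0 < b ^ 2 / (c1 * (x - a)) ^ 2 := by positivity
    linarith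
  have key : ∀ l : Filter ℝ,
      Filter.Tendsto (fun x : ℝ => |x - a|) l Filter.atTop →
      (∀ᶠ x in l, x ≠ a) →
      Filter.Tendsto f l (nhds (1 / c1 ^ 2)) := by
    intro l habs hne
    have hsq : Filter.Tendsto (fun x : ℝ => (c1 * (x - a)) ^ 2) l Filter.atTop := by
      have h2 : Filter.Tendsto (fun x : ℝ => |x - a| ^ 2) l Filter.atTop :=
        (Filter.tendsto_pow_atTop two_ne_zero).comp habs
      have h3 := h2.const_mul_atTop hc1sq
      refine h3.congr fun x => ?_
      rw [sq_abs]; ring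
    have htail : Filter.Tendsto (fun x : ℝ => b ^ 2 / (c1 * (x - a)) ^ 2) l (nhds 0) :=
      tendsto_const_nhds.div_atTop hsq
    have := (tendsto_const_nhds (x := 1 / c1 ^ 2) (f := l)).add htail
    rw [add_zero] at this
    refine this.congr' ?_
    filter_upwards [hne] with x hx
    exact (hfg x hx).symm
  have htop : Filter.Tendsto f Filter.atTop (nhds (1 / c1 ^ 2)) := by
    refine key _ ?_ ?_
    · have h1 : Filter.Tendsto (fun x : ℝ => x - a) Filter.atTop Filter.atTop :=
        Filter.tendsto_atTop_add_const_right _ (-a) Filter.tendsto_id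
      exact Filter.tendsto_abs_atTop_atTop.comp h1
    · filter_upwards [Filter.eventually_gt_atTop a] with x hx using hx.ne'
  have hbot : Filter.Tendsto f Filter.atBot (nhds (1 / c1 ^ 2)) := by
    refine key _ ?_ ?_
    · have : Filter.Tendsto (fun x : ℝ => x - a) Filter.atBot Filter.atBot :=
        Filter.tendsto_atBot_add_const_right _ (-a) Filter.tendsto_id
      exact Filter.tendsto_abs_atBot_atTop.comp this
    · filter_upwards [Filter.eventually_lt_atBot a] with x hx using hx.ne
  refine ⟨hgt, ⟨?_, ?_⟩, htop, hbot⟩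
  · rintro y ⟨x, hx, rfl⟩
    exact (hgt x hx).le
  · intro y hy
    refine ge_of_tendsto htop ?_
    filter_upwards [Filter.eventually_gt_atTop (-c0 / c1)] with x hx
    exact hy ⟨x, hx.ne', rfl⟩
end

section
/- Let X be a real N × m matrix of full column rank m ≤ N, y ∈ ℝ^N, c ∈ ℝ^m nonzero, c0 ∈ ℝ. Let α̂ = (XᵀX)⁻¹Xᵀy and y0² = ‖y − Xα̂‖². If c0 + cᵀα̂ ≠ 0, then the function g(α) = ‖y − Xα‖²/(c0 + cᵀα)², defined on {α : c0 + cᵀα ≠ 0}, is uniquely minimized at α* = α̂ + (y0²/(c0 + cᵀα̂))·(XᵀX)⁻¹c. -/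
/-!
Write `β = X (α - α̂)`, `w = X (XᵀX)⁻¹ c`, `s = y0²` and `d = c0 + cᵀα̂`. The normal equations
give `‖y - Xα‖² = s + ‖β‖²`, and `cᵀα = cᵀα̂ + ⟪w, β⟫`, so `g α = (s + ‖β‖²) / (d + ⟪w, β⟫)²`.
The identity
`(s + ‖β‖²) (d² + s‖w‖²) - s (d + ⟪w, β⟫)² = ‖d β - s w‖² + s (‖w‖² ‖β‖² - ⟪w, β⟫²)`
and Cauchy–Schwarz show that this ratio is at least `s / (d² + s‖w‖²)`, with equality exactly
at `β = (s / d) w`, i.e. at `α = α*`; injectivity of `X` makes the minimizer unique.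
-/

open Matrix
open scoped RealInnerProductSpace

section ShiftedRatio

variable {E : Type*} [NormedAddCommGroup E] [InnerProductSpace ℝ E]

noncomputable def shiftedRatio (s d : ℝ) (w β : E) : ℝ :=
  (s + ⟪β, β⟫) / (d + ⟪w, β⟫) ^ 2

variable {s d : ℝ} {w β : E}

theorem add_inner_div_smul_self (s d : ℝ) (w : E) (hd : d ≠ 0) :
    d + ⟪w, (s / d) • w⟫ = (d ^ 2 + s * ⟪w, w⟫) / d := by
  rw [real_inner_smul_right]
  field_simp

theorem sq_add_mul_real_inner_self_pos (hs : 0 ≤ s) (hd : d ≠ 0) :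
    0 < d ^ 2 + s * ⟪w, w⟫ := by
  have := real_inner_self_nonneg (x := w)
  positivity

theorem shiftedRatio_div_smul_self (hs : 0 ≤ s) (hd : d ≠ 0) :
    shiftedRatio s d w ((s / d) • w) = s / (d ^ 2 + s * ⟪w, w⟫) := by
  have hD := sq_add_mul_real_inner_self_pos (w := w) hs hd
  rw [shiftedRatio, add_inner_div_smul_self s d w hd, real_inner_smul_left, real_inner_smul_right]
  field_simp

theorem mul_sq_add_real_inner_self_le (hs : 0 ≤ s) (d : ℝ) (w β : E) :
    s * (d + ⟪w, β⟫) ^ 2 + ⟪d • β - s • w, d • β - s • w⟫ ≤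
      (s + ⟪β, β⟫) * (d ^ 2 + s * ⟪w, w⟫) := by
  have hcs : ⟪w, β⟫ ^ 2 ≤ ⟪w, w⟫ * ⟪β, β⟫ := by nlinarith [real_inner_mul_inner_self_le w β]
  have hexpand : (s + ⟪β, β⟫) * (d ^ 2 + s * ⟪w, w⟫) - s * (d + ⟪w, β⟫) ^ 2 =
      ⟪d • β - s • w, d • β - s • w⟫ + s * (⟪w, w⟫ * ⟪β, β⟫ - ⟪w, β⟫ ^ 2) := by
    simp only [inner_sub_left, inner_sub_right, real_inner_smul_left, real_inner_smul_right,
      real_inner_comm w β]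
    ring
  nlinarith [mul_nonneg hs (sub_nonneg.mpr hcs)]

theorem div_le_shiftedRatio (hs : 0 ≤ s) (hd : d ≠ 0) (hβ : d + ⟪w, β⟫ ≠ 0) :
    s / (d ^ 2 + s * ⟪w, w⟫) ≤ shiftedRatio s d w β := by
  rw [shiftedRatio, div_le_div_iff₀ (sq_add_mul_real_inner_self_pos hs hd) (by positivity)]
  linarith [mul_sq_add_real_inner_self_le hs d w β, real_inner_self_nonneg (x := d • β - s • w)]

theorem eq_div_smul_of_shiftedRatio_eq (hs : 0 ≤ s) (hd : d ≠ 0) (hβ : d + ⟪w, β⟫ ≠ 0)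
    (h : shiftedRatio s d w β = s / (d ^ 2 + s * ⟪w, w⟫)) : β = (s / d) • w := by
  rw [shiftedRatio, div_eq_div_iff (by positivity) (sq_add_mul_real_inner_self_pos hs hd).ne'] at h
  have hzero : ⟪d • β - s • w, d • β - s • w⟫ = 0 :=
    le_antisymm (by linarith [mul_sq_add_real_inner_self_le hs d w β]) real_inner_self_nonneg
  rw [inner_self_eq_zero, sub_eq_zero] at hzero
  rw [div_eq_inv_mul, ← smul_smul, ← hzero, smul_smul, inv_mul_cancel₀ hd, one_smul]

end ShiftedRatio

theorem EuclideanSpace.real_inner_toLp_toLp {n : Type*} [Fintype n] (x y : n → ℝ) :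
    ⟪WithLp.toLp 2 x, WithLp.toLp 2 y⟫ = x ⬝ᵥ y := by
  rw [EuclideanSpace.inner_toLp_toLp, star_trivial, dotProduct_comm]

namespace Matrix

variable {n p : Type*} [Fintype p]

theorem mulVec_injective_of_rank_eq_card {K : Type*} [Field K] (A : Matrix n p K)
    (h : A.rank = Fintype.card p) : Function.Injective A.mulVec := by
  have hrn := LinearMap.finrank_range_add_finrank_ker A.mulVecLin
  rw [← rank, h, Module.finrank_fintype_fun_eq_card, add_eq_left,
    Submodule.finrank_eq_zero] at hrn
  exact LinearMap.ker_eq_bot.mp hrn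

variable [Fintype n]

theorem isUnit_det_transpose_mul_self [DecidableEq p] (X : Matrix n p ℝ)
    (hX : Function.Injective X.mulVec) : IsUnit (Xᵀ * X).det := by
  have := (PosDef.conjTranspose_mul_self X hX).isUnit
  rwa [conjTranspose_eq_transpose_of_trivial, isUnit_iff_isUnit_det] at this

section CommRing

variable {R : Type*} [CommRing R] (X : Matrix n p R)

theorem dotProduct_transpose_mul_self_mulVec (v w : p → R) :
    v ⬝ᵥ (Xᵀ * X) *ᵥ w = X *ᵥ v ⬝ᵥ X *ᵥ w := by
  rw [← mulVec_mulVec, dotProduct_mulVec, vecMul_transpose]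

theorem dotProduct_eq_dotProduct_mulVec_inv [DecidableEq p] (hX : IsUnit (Xᵀ * X).det)
    (c v : p → R) : c ⬝ᵥ v = X *ᵥ ((Xᵀ * X)⁻¹ *ᵥ c) ⬝ᵥ X *ᵥ v := by
  rw [dotProduct_comm (X *ᵥ _), ← dotProduct_transpose_mul_self_mulVec, mulVec_mulVec,
    mul_nonsing_inv _ hX, one_mulVec, dotProduct_comm]

theorem transpose_mulVec_sub_mulVec_leastSquares [DecidableEq p] (hX : IsUnit (Xᵀ * X).det)
    (y : n → R) : Xᵀ *ᵥ (y - X *ᵥ ((Xᵀ * X)⁻¹ *ᵥ (Xᵀ *ᵥ y))) = 0 := by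
  rw [mulVec_sub, mulVec_mulVec, mulVec_mulVec, mul_nonsing_inv _ hX, one_mulVec, sub_self]

theorem sub_mulVec_dotProduct_self_of_transpose_mulVec_eq_zero {y : n → R} {a : p → R}
    (ha : Xᵀ *ᵥ (y - X *ᵥ a) = 0) (α : p → R) :
    (y - X *ᵥ α) ⬝ᵥ (y - X *ᵥ α) =
      (y - X *ᵥ a) ⬝ᵥ (y - X *ᵥ a) + X *ᵥ (α - a) ⬝ᵥ X *ᵥ (α - a) := by
  have horth : (y - X *ᵥ a) ⬝ᵥ X *ᵥ (α - a) = 0 := by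
    rw [dotProduct_mulVec, ← mulVec_transpose, ha, zero_dotProduct]
  have hsplit : y - X *ᵥ α = (y - X *ᵥ a) - X *ᵥ (α - a) := by
    rw [mulVec_sub]; abel
  rw [hsplit]
  generalize y - X *ᵥ a = e at horth ⊢
  simp only [sub_dotProduct, dotProduct_sub, dotProduct_comm (X *ᵥ (α - a)), horth]
  ring

end CommRing

variable (X : Matrix n p ℝ)

theorem sum_sq_sub_mulVec_of_transpose_mulVec_eq_zero {y : n → ℝ} {a : p → ℝ}
    (ha : Xᵀ *ᵥ (y - X *ᵥ a) = 0) (α : p → ℝ) :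
    ∑ i, (y i - (X *ᵥ α) i) ^ 2 =
      ∑ i, (y i - (X *ᵥ a) i) ^ 2 +
        ⟪WithLp.toLp 2 (X *ᵥ (α - a)), WithLp.toLp 2 (X *ᵥ (α - a))⟫ := by
  have hsum (v : n → ℝ) : ∑ i, (y i - v i) ^ 2 = (y - v) ⬝ᵥ (y - v) := by
    simp only [dotProduct, Pi.sub_apply, sq]
  rw [EuclideanSpace.real_inner_toLp_toLp, hsum, hsum]
  exact sub_mulVec_dotProduct_self_of_transpose_mulVec_eq_zero X ha α

theorem add_dotProduct_eq_add_inner [DecidableEq p] (hX : IsUnit (Xᵀ * X).det) (c : p → ℝ)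
    (c0 : ℝ) (a α : p → ℝ) :
    c0 + c ⬝ᵥ α = c0 + c ⬝ᵥ a +
      ⟪WithLp.toLp 2 (X *ᵥ ((Xᵀ * X)⁻¹ *ᵥ c)), WithLp.toLp 2 (X *ᵥ (α - a))⟫ := by
  rw [EuclideanSpace.real_inner_toLp_toLp, ← dotProduct_eq_dotProduct_mulVec_inv X hX,
    dotProduct_sub]
  ring

end Matrix

theorem stmt_4_general (N m : ℕ) (X : Matrix (Fin N) (Fin m) ℝ)
    (hX : X.rank = m) (y : Fin N → ℝ) (c : Fin m → ℝ) (c0 : ℝ) :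
    let αhat : Fin m → ℝ := ((Xᵀ * X)⁻¹).mulVec (Xᵀ.mulVec y)
    let y0sq : ℝ := ∑ i, (y i - X.mulVec αhat i) ^ 2
    let g : (Fin m → ℝ) → ℝ :=
      fun α => (∑ i, (y i - X.mulVec α i) ^ 2) / (c0 + c ⬝ᵥ α) ^ 2
    let αstar : Fin m → ℝ :=
      αhat + (y0sq / (c0 + c ⬝ᵥ αhat)) • ((Xᵀ * X)⁻¹).mulVec c
    c0 + c ⬝ᵥ αhat ≠ 0 →
      c0 + c ⬝ᵥ αstar ≠ 0 ∧
      ∀ α : Fin m → ℝ, c0 + c ⬝ᵥ α ≠ 0 →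
        g αstar ≤ g α ∧ (g α = g αstar → α = αstar) := by
  intro αhat y0sq g αstar hd
  have hinj := X.mulVec_injective_of_rank_eq_card (by rw [hX, Fintype.card_fin])
  have hA := X.isUnit_det_transpose_mul_self hinj
  have hnormal : Xᵀ *ᵥ (y - X *ᵥ αhat) = 0 := X.transpose_mulVec_sub_mulVec_leastSquares hA y
  set w := WithLp.toLp 2 (X *ᵥ ((Xᵀ * X)⁻¹ *ᵥ c))
  set φ : (Fin m → ℝ) → EuclideanSpace ℝ (Fin N) := fun α => WithLp.toLp 2 (X *ᵥ (α - αhat))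
  have hden (α) : c0 + c ⬝ᵥ α = c0 + c ⬝ᵥ αhat + ⟪w, φ α⟫ :=
    X.add_dotProduct_eq_add_inner hA c c0 αhat α
  have hg (α) : g α = shiftedRatio y0sq (c0 + c ⬝ᵥ αhat) w (φ α) := by
    dsimp only [g]
    rw [shiftedRatio, ← hden, X.sum_sq_sub_mulVec_of_transpose_mulVec_eq_zero hnormal α]
  have hφstar : φ αstar = (y0sq / (c0 + c ⬝ᵥ αhat)) • w := by
    simp [φ, αstar, w, mulVec_smul]
  have hs : 0 ≤ y0sq := by positivity
  refine ⟨?_, fun α hα => ?_⟩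
  · rw [hden, hφstar, add_inner_div_smul_self _ _ _ hd]
    exact div_ne_zero (sq_add_mul_real_inner_self_pos hs hd).ne' hd
  rw [hden] at hα
  rw [hg, hg, hφstar, shiftedRatio_div_smul_self hs hd]
  refine ⟨div_le_shiftedRatio hs hd hα, fun h => ?_⟩
  have hφ := eq_div_smul_of_shiftedRatio_eq hs hd hα h
  rw [← hφstar] at hφ
  exact sub_left_injective (hinj (WithLp.toLp_injective 2 hφ))

theorem stmt_4 (N m : ℕ) (hm : m ≤ N) (X : Matrix (Fin N) (Fin m) ℝ)
    (hX : X.rank = m) (y : Fin N → ℝ) (c : Fin m → ℝ) (hc : c ≠ 0) (c0 : ℝ) :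
    let αhat : Fin m → ℝ := ((Xᵀ * X)⁻¹).mulVec (Xᵀ.mulVec y)
    let y0sq : ℝ := ∑ i, (y i - X.mulVec αhat i) ^ 2
    let g : (Fin m → ℝ) → ℝ :=
      fun α => (∑ i, (y i - X.mulVec α i) ^ 2) / (c0 + c ⬝ᵥ α) ^ 2
    let αstar : Fin m → ℝ :=
      αhat + (y0sq / (c0 + c ⬝ᵥ αhat)) • ((Xᵀ * X)⁻¹).mulVec c
    c0 + c ⬝ᵥ αhat ≠ 0 →
      c0 + c ⬝ᵥ αstar ≠ 0 ∧
      ∀ α : Fin m → ℝ, c0 + c ⬝ᵥ α ≠ 0 →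
        g αstar ≤ g α ∧ (g α = g αstar → α = αstar) :=
  stmt_4_general N m X hX y c c0
end

section
/- Let X be a real N × m matrix of full column rank, y ∈ ℝ^N, c ∈ ℝ^m nonzero, c0 ∈ ℝ, α̂ = (XᵀX)⁻¹Xᵀy, y0² = ‖y − Xα̂‖². If c0 + cᵀα̂ = 0 and y0² > 0, then the infimum of g(α) = ‖y − Xα‖²/(c0 + cᵀα)² over {α : c0 + cᵀα ≠ 0} is not attained. -/
open Matrix

theorem stmt_6 (N m : ℕ) (hm : m ≤ N) (X : Matrix (Fin N) (Fin m) ℝ)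
    (hX : X.rank = m) (y : Fin N → ℝ) (c : Fin m → ℝ) (hc : c ≠ 0) (c0 : ℝ) :
    let αhat : Fin m → ℝ := ((Xᵀ * X)⁻¹).mulVec (Xᵀ.mulVec y)
    let y0sq : ℝ := ∑ i, (y i - X.mulVec αhat i) ^ 2
    let g : (Fin m → ℝ) → ℝ :=
      fun α => (∑ i, (y i - X.mulVec α i) ^ 2) / (c0 + c ⬝ᵥ α) ^ 2
    c0 + c ⬝ᵥ αhat = 0 → 0 < y0sq →
      ¬ ∃ α : Fin m → ℝ, c0 + c ⬝ᵥ α ≠ 0 ∧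
          ∀ α' : Fin m → ℝ, c0 + c ⬝ᵥ α' ≠ 0 → g α ≤ g α' := by
  intro αhat y0sq g h0 hy0
  rintro ⟨α, hα, hmin⟩
  -- invertibility of XᵀX
  have hker : LinearMap.ker X.mulVecLin = ⊥ := by
    have hrn := LinearMap.finrank_range_add_finrank_ker X.mulVecLin
    have hr : Module.finrank ℝ (LinearMap.range X.mulVecLin) = m := hX
    rw [hr] at hrn
    simp only [Module.finrank_pi, Fintype.card_fin] at hrn
    have : Module.finrank ℝ (LinearMap.ker X.mulVecLin) = 0 := by omega
    exact Submodule.finrank_eq_zero.mp this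
  have hker2 : LinearMap.ker (Xᵀ * X).mulVecLin = ⊥ := by
    rw [Matrix.ker_mulVecLin_transpose_mul_self]; exact hker
  have hunit : IsUnit (Xᵀ * X) := by
    rw [← Matrix.mulVec_injective_iff_isUnit]
    exact LinearMap.ker_eq_bot.mp hker2
  have hdet : IsUnit (Xᵀ * X).det := (Matrix.isUnit_iff_isUnit_det _).mp hunit
  -- orthogonality
  have horth : Xᵀ.mulVec (y - X.mulVec αhat) = 0 := by
    have : (Xᵀ * X) * (Xᵀ * X)⁻¹ = 1 := Matrix.mul_nonsing_inv _ hdet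
    simp only [αhat, Matrix.mulVec_sub, Matrix.mulVec_mulVec, ← Matrix.mul_assoc, this,
      Matrix.one_mul, sub_self]
  set r : Fin N → ℝ := y - X.mulVec αhat with hr
  have hdot : ∀ w : Fin m → ℝ, r ⬝ᵥ X.mulVec w = 0 := by
    intro w
    rw [Matrix.dotProduct_mulVec, ← Matrix.mulVec_transpose, horth, zero_dotProduct]
  -- decompose
  set w : Fin N → ℝ := X.mulVec (α - αhat) with hw
  have hyα : y - X.mulVec α = r - w := by
    simp [hr, hw, Matrix.mulVec_sub]
  set α' : Fin m → ℝ := αhat + (2:ℝ) • (α - αhat) with hα'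
  have hyα' : y - X.mulVec α' = r - (2:ℝ) • w := by
    simp [hr, hw, hα', Matrix.mulVec_add, Matrix.mulVec_smul, Matrix.mulVec_sub]
    module
  set t : ℝ := c0 + c ⬝ᵥ α with ht
  have hct : c0 + c ⬝ᵥ α' = 2 * t := by
    simp only [hα', dotProduct_add, dotProduct_smul, dotProduct_sub, ht,
      smul_eq_mul]
    have := h0
    ring_nf
    nlinarith [h0]
  have hα'ne : c0 + c ⬝ᵥ α' ≠ 0 := by
    rw [hct]; exact mul_ne_zero two_ne_zero hα
  -- norms as dot products
  have hsum : ∀ v : Fin N → ℝ, ∑ i, v i ^ 2 = v ⬝ᵥ v := by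
    intro v; simp [dotProduct, sq]
  have hrw : r ⬝ᵥ w = 0 := hdot _
  have hwr : w ⬝ᵥ r = 0 := by rw [dotProduct_comm]; exact hrw
  set R : ℝ := r ⬝ᵥ r with hR
  set W : ℝ := w ⬝ᵥ w with hW
  have hWnn : 0 ≤ W := Finset.sum_nonneg fun i _ => mul_self_nonneg _
  have hRpos : 0 < R := by
    have : y0sq = R := by
      simp only [y0sq, hR, hsum]; rfl
    linarith [hy0, this.symm.le]
  have hgα : g α = (R + W) / t ^ 2 := by
    simp only [g, ← ht]
    congr 1
    have : ∀ i, y i - X.mulVec α i = (r - w) i := fun i => congrFun hyα i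
    calc ∑ i, (y i - X.mulVec α i) ^ 2 = ∑ i, ((r - w) i) ^ 2 := by
          exact Finset.sum_congr rfl fun i _ => by rw [this i]
      _ = (r - w) ⬝ᵥ (r - w) := hsum _
      _ = R + W := by
          simp [sub_dotProduct, dotProduct_sub, hrw, hwr, hR, hW]
  have hgα' : g α' = (R + 4 * W) / (4 * t ^ 2) := by
    simp only [g, hct]
    have h1 : ∀ i, y i - X.mulVec α' i = (r - (2:ℝ) • w) i := fun i => congrFun hyα' i
    have h2 : ∑ i, (y i - X.mulVec α' i) ^ 2 = R + 4 * W := by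
      calc ∑ i, (y i - X.mulVec α' i) ^ 2 = ∑ i, ((r - (2:ℝ) • w) i) ^ 2 :=
            Finset.sum_congr rfl fun i _ => by rw [h1 i]
        _ = (r - (2:ℝ) • w) ⬝ᵥ (r - (2:ℝ) • w) := hsum _
        _ = R + 4 * W := by
            simp [sub_dotProduct, dotProduct_sub, smul_dotProduct,
              dotProduct_smul, hrw, hwr, hR, hW]; ring
    rw [h2]; ring_nf
  have ht2 : 0 < t ^ 2 := by positivity
  have hlt : g α' < g α := by
    rw [hgα, hgα']
    rw [div_lt_div_iff₀ (by linarith) ht2]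
    nlinarith
  exact absurd (hmin α' hα'ne) (not_le.mpr hlt)
end

section
/- Let L ⊆ ℝ^N be a linear subspace, y ∈ ℝ^N, c̃ ∈ ℝ^N, c0 ∈ ℝ. Let π_L be the orthogonal projection onto L. If c0 + ⟨c̃, π_L(y)⟩ ≠ 0, then the function α̃ ↦ ‖y − α̃‖²/(c0 + ⟨c̃, α̃⟩)² restricted to {α̃ ∈ L : c0 + ⟨c̃, α̃⟩ ≠ 0} has the unique minimizer α̃* = π_L(y) + (‖y − π_L(y)‖²/(c0 + ⟨c̃, π_L(y)⟩)) · π_L(c̃). -/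
/-!
Write `α = π_L y + v` with `v ∈ L`. By Pythagoras and the self-adjointness of `π_L`, the
objective becomes `(d + ‖v‖²) / (s + ⟪q, v⟫)²` with `d = ‖y - π_L y‖²`, `s = c0 + ⟪c̃, π_L y⟫`
and `q = π_L c̃`. The identity
`(d + ‖v‖²)(s² + d‖q‖²) - d(s + ⟪q, v⟫)² = ‖s v - d q‖² + d(‖q‖²‖v‖² - ⟪q, v⟫²)`
and Cauchy–Schwarz bound the objective below by `d / (s² + d‖q‖²)`, with equality exactly
when `s v = d q`, i.e. at `α = α*`.
-/

open scoped RealInnerProductSpace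

section InnerProductSpace

variable {E : Type*} [NormedAddCommGroup E] [InnerProductSpace ℝ E]

theorem inner_sq_le_norm_sq_mul_norm_sq (q v : E) : ⟪q, v⟫ ^ 2 ≤ ‖q‖ ^ 2 * ‖v‖ ^ 2 := by
  rw [← mul_pow, ← sq_abs]
  gcongr
  exact abs_real_inner_le_norm q v

theorem add_norm_sq_mul_sub_mul_sq_add_inner (d s : ℝ) (q v : E) :
    (d + ‖v‖ ^ 2) * (s ^ 2 + d * ‖q‖ ^ 2) - d * (s + ⟪q, v⟫) ^ 2 =
      ‖s • v - d • q‖ ^ 2 + d * (‖q‖ ^ 2 * ‖v‖ ^ 2 - ⟪q, v⟫ ^ 2) := by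
  rw [norm_sub_sq_real, norm_smul, norm_smul, real_inner_smul_left, real_inner_smul_right,
    real_inner_comm, Real.norm_eq_abs, Real.norm_eq_abs, mul_pow, mul_pow, sq_abs, sq_abs]
  ring

variable {d s : ℝ} {q v : E}

theorem mul_sq_add_inner_le (hd : 0 ≤ d) :
    d * (s + ⟪q, v⟫) ^ 2 ≤ (d + ‖v‖ ^ 2) * (s ^ 2 + d * ‖q‖ ^ 2) := by
  have hid := add_norm_sq_mul_sub_mul_sq_add_inner d s q v
  have hcs := mul_nonneg hd (sub_nonneg.2 (inner_sq_le_norm_sq_mul_norm_sq q v))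
  linarith [sq_nonneg ‖s • v - d • q‖]

theorem eq_div_smul_of_mul_sq_add_inner_eq (hd : 0 ≤ d) (hs : s ≠ 0)
    (h : d * (s + ⟪q, v⟫) ^ 2 = (d + ‖v‖ ^ 2) * (s ^ 2 + d * ‖q‖ ^ 2)) : v = (d / s) • q := by
  have hid := add_norm_sq_mul_sub_mul_sq_add_inner d s q v
  have hcs := mul_nonneg hd (sub_nonneg.2 (inner_sq_le_norm_sq_mul_norm_sq q v))
  have hzero : ‖s • v - d • q‖ ^ 2 = 0 := by linarith [sq_nonneg ‖s • v - d • q‖]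
  rw [sq_eq_zero_iff, norm_eq_zero, sub_eq_zero] at hzero
  rw [div_eq_inv_mul, mul_smul, ← hzero, smul_smul, inv_mul_cancel₀ hs, one_smul]

theorem add_inner_div_smul (hs : s ≠ 0) :
    s + ⟪q, (d / s) • q⟫ = (s ^ 2 + d * ‖q‖ ^ 2) / s := by
  rw [real_inner_smul_right, real_inner_self_eq_norm_sq]
  field_simp

theorem div_le_div_sq_add_inner (hd : 0 ≤ d) (hs : s ≠ 0) (hv : s + ⟪q, v⟫ ≠ 0) :
    d / (s ^ 2 + d * ‖q‖ ^ 2) ≤ (d + ‖v‖ ^ 2) / (s + ⟪q, v⟫) ^ 2 := by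
  rw [div_le_div_iff₀ (by positivity) (by positivity)]
  linarith [mul_sq_add_inner_le (s := s) (q := q) (v := v) hd]

theorem eq_div_smul_of_div_sq_add_inner_eq (hd : 0 ≤ d) (hs : s ≠ 0) (hv : s + ⟪q, v⟫ ≠ 0)
    (h : (d + ‖v‖ ^ 2) / (s + ⟪q, v⟫) ^ 2 = d / (s ^ 2 + d * ‖q‖ ^ 2)) : v = (d / s) • q := by
  rw [div_eq_div_iff (by positivity) (by positivity)] at h
  exact eq_div_smul_of_mul_sq_add_inner_eq hd hs (by linarith)

theorem div_sq_add_inner_div_smul (hd : 0 ≤ d) (hs : s ≠ 0) :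
    (d + ‖(d / s) • q‖ ^ 2) / (s + ⟪q, (d / s) • q⟫) ^ 2 = d / (s ^ 2 + d * ‖q‖ ^ 2) := by
  have : 0 < s ^ 2 + d * ‖q‖ ^ 2 := by positivity
  rw [add_inner_div_smul hs, norm_smul, Real.norm_eq_abs, mul_pow, sq_abs]
  field_simp

end InnerProductSpace

namespace Submodule

variable {E : Type*} [NormedAddCommGroup E] [InnerProductSpace ℝ E]
  (K : Submodule ℝ E) [K.HasOrthogonalProjection] {α : E}

theorem norm_sub_sq_eq_add_norm_sub_starProjection_sq (y : E) (hα : α ∈ K) :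
    ‖y - α‖ ^ 2 = ‖y - K.starProjection y‖ ^ 2 + ‖α - K.starProjection y‖ ^ 2 := by
  rw [← sub_sub_sub_cancel_right y α (K.starProjection y), norm_sub_sq_real,
    K.starProjection_inner_eq_zero y _ (K.sub_mem hα (K.starProjection_apply_mem y))]
  ring

theorem inner_eq_add_inner_starProjection (c y : E) (hα : α ∈ K) :
    ⟪c, α⟫ = ⟪c, K.starProjection y⟫ + ⟪K.starProjection c, α - K.starProjection y⟫ := by
  rw [K.inner_starProjection_left_eq_right, K.starProjection_eq_self_iff.mpr
    (K.sub_mem hα (K.starProjection_apply_mem y)), ← inner_add_right, add_sub_cancel]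

end Submodule

theorem stmt_13 (N : ℕ) (L : Submodule ℝ (EuclideanSpace ℝ (Fin N)))
    (y ct : EuclideanSpace ℝ (Fin N)) (c0 : ℝ)
    (h : c0 + ⟪ct, (L.orthogonalProjection y : EuclideanSpace ℝ (Fin N))⟫ ≠ 0) :
    let pY : EuclideanSpace ℝ (Fin N) := L.orthogonalProjection y
    let astar : EuclideanSpace ℝ (Fin N) :=
      pY + (‖y - pY‖ ^ 2 / (c0 + ⟪ct, pY⟫)) •
        (L.orthogonalProjection ct : EuclideanSpace ℝ (Fin N))
    astar ∈ L ∧ c0 + ⟪ct, astar⟫ ≠ 0 ∧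
      ∀ α ∈ L, c0 + ⟪ct, α⟫ ≠ 0 →
        ‖y - astar‖ ^ 2 / (c0 + ⟪ct, astar⟫) ^ 2 ≤ ‖y - α‖ ^ 2 / (c0 + ⟪ct, α⟫) ^ 2 ∧
        (‖y - α‖ ^ 2 / (c0 + ⟪ct, α⟫) ^ 2 =
            ‖y - astar‖ ^ 2 / (c0 + ⟪ct, astar⟫) ^ 2 → α = astar) := by
  intro pY astar
  have hd : 0 ≤ ‖y - pY‖ ^ 2 := sq_nonneg _
  have hmem : astar ∈ L := L.add_mem (L.coe_mem _) (L.smul_mem _ (L.coe_mem _))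
  have hshift : astar - pY = (‖y - pY‖ ^ 2 / (c0 + ⟪ct, pY⟫)) • L.starProjection ct :=
    add_sub_cancel_left _ _
  have hden : ∀ α ∈ L, c0 + ⟪ct, α⟫ = c0 + ⟪ct, pY⟫ + ⟪L.starProjection ct, α - pY⟫ :=
    fun α hα ↦ by rw [L.inner_eq_add_inner_starProjection ct y hα, add_assoc]; rfl
  have hratio : ∀ α ∈ L, ‖y - α‖ ^ 2 / (c0 + ⟪ct, α⟫) ^ 2 =
      (‖y - pY‖ ^ 2 + ‖α - pY‖ ^ 2) / (c0 + ⟪ct, pY⟫ + ⟪L.starProjection ct, α - pY⟫) ^ 2 :=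
    fun α hα ↦ by rw [hden α hα, L.norm_sub_sq_eq_add_norm_sub_starProjection_sq y hα]; rfl
  refine ⟨hmem, ?_, fun α hα hα0 ↦ ?_⟩
  · rw [hden astar hmem, hshift, add_inner_div_smul h]
    exact div_ne_zero (by positivity) h
  · rw [hden α hα] at hα0
    rw [hratio α hα, hratio astar hmem, hshift, div_sq_add_inner_div_smul hd h]
    refine ⟨div_le_div_sq_add_inner hd h hα0, fun heq ↦ ?_⟩
    exact sub_left_injective ((eq_div_smul_of_div_sq_add_inner_eq hd h hα0 heq).trans hshift.symm)
end

section
/- Consider the two-node cyclic model: for fixed β₁₂ ∈ ℝ and data vectors Y₁, Y₂ ∈ ℝ^N that are linearly independent, the function β₂₁ ↦ ‖Y₂ − β₂₁Y₁‖²/(1 − β₁₂β₂₁)² on {β₂₁ : β₁₂β₂₁ ≠ 1} attains a unique minimum if and only if 1 − β₁₂·⟨Y₂, Y₁⟩/‖Y₁‖² ≠ 0. -/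
/-!
Write `a = ‖Y₁‖²`, `c = ⟨Y₂, Y₁⟩`, `d = ‖Y₂‖²`, `b = β₁₂` and `A = d b² - 2 c b + a = ‖b Y₂ - Y₁‖²`,
which is positive because linear independence makes Cauchy–Schwarz strict, `c² < a d`.
Completing the square,
`A (d - 2 c x + a x²) = (a d - c²) (1 - b x)² + ((a - c b) x - (c - d b))²`,
so on `b x ≠ 1` the objective is an increasing function of `r(x)²`, where `r` is the Möbius map
`x ↦ ((a - c b) x - (c - d b)) / (1 - b x)`, non-degenerate because its determinant is `A`.
If `a - c b ≠ 0`, `r` has exactly one zero, which is the unique minimiser. If `a - c b = 0`,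
`r(x)` is a nonzero constant over `1 - b x`, and doubling `1 - b x` strictly decreases `r(x)²`.
-/

open Finset

section Gram

variable {ι : Type*} [Fintype ι]

theorem sum_sq_pos_of_ne_zero {v : ι → ℝ} (hv : v ≠ 0) : 0 < ∑ i, v i ^ 2 := by
  obtain ⟨i, hi⟩ := Function.ne_iff.mp hv
  exact sum_pos' (fun j _ => sq_nonneg (v j)) ⟨i, mem_univ i, pow_two_pos_of_ne_zero hi⟩

theorem sum_sub_mul_sq (u v : ι → ℝ) (x : ℝ) :
    ∑ i, (v i - x * u i) ^ 2 =
      ∑ i, v i ^ 2 - 2 * (∑ i, v i * u i) * x + (∑ i, u i ^ 2) * x ^ 2 := by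
  simp only [sub_sq, sum_add_distrib, sum_sub_distrib, mul_pow, sum_mul, mul_sum]
  congr 1; congr 1
  · exact sum_congr rfl fun i _ => by ring
  · exact sum_congr rfl fun i _ => by ring

theorem sum_sq_pos_and_sq_sum_mul_lt_of_linearIndependent {u v : ι → ℝ}
    (h : LinearIndependent ℝ ![u, v]) :
    0 < ∑ i, u i ^ 2 ∧ (∑ i, v i * u i) ^ 2 < (∑ i, u i ^ 2) * ∑ i, v i ^ 2 := by
  set a := ∑ i, u i ^ 2
  set c := ∑ i, v i * u i
  have ha : 0 < a := sum_sq_pos_of_ne_zero (by simpa using h.ne_zero 0)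
  -- the residual of projecting `v` onto `u`; its squared norm is `d - c² / a`
  have hres : v - (c / a) • u ≠ 0 := fun h0 => by
    simpa using LinearIndependent.pair_iff.mp h (-(c / a)) 1 (by rw [← h0]; module)
  have hpos := sum_sq_pos_of_ne_zero hres
  simp only [Pi.sub_apply, Pi.smul_apply, smul_eq_mul, sum_sub_mul_sq] at hpos
  have key :
      a * (∑ i, v i ^ 2 - 2 * c * (c / a) + a * (c / a) ^ 2) = a * ∑ i, v i ^ 2 - c ^ 2 := by
    field_simp
    ring
  exact ⟨ha, sub_pos.mp (key ▸ mul_pos ha hpos)⟩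

end Gram

theorem existsUnique_minimizer_sq_mobius_iff {e m b : ℝ} (hdet : e - b * m ≠ 0) :
    (∃! x, b * x ≠ 1 ∧ ∀ y, b * y ≠ 1 →
        ((e * x - m) / (1 - b * x)) ^ 2 ≤ ((e * y - m) / (1 - b * y)) ^ 2) ↔ e ≠ 0 := by
  constructor
  · rintro ⟨x, ⟨hx, hmin⟩, -⟩ rfl
    obtain ⟨hb, hm⟩ : b ≠ 0 ∧ m ≠ 0 := by simpa using hdet
    have ht : 1 - b * x ≠ 0 := sub_ne_zero.2 hx.symm
    set y := (2 * b * x - 1) / b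
    have hy : 1 - b * y = 2 * (1 - b * x) := by simp only [y]; field_simp; ring
    have hle := hmin y (by rw [← sub_ne_zero, ← neg_ne_zero, neg_sub, hy]; positivity)
    rw [hy, zero_mul, zero_mul, div_mul_eq_div_div_swap, div_pow _ 2] at hle
    have : 0 < ((0 - m) / (1 - b * x)) ^ 2 := by positivity
    linarith
  · intro he
    have hroot : e * (m / e) - m = 0 := by field_simp; ring
    have hx₀ : b * (m / e) ≠ 1 := fun h => hdet (by field_simp at h; linarith)
    refine ⟨m / e, ⟨hx₀, fun y _ => ?_⟩, fun x ⟨hx, hmin⟩ => ?_⟩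
    · rw [hroot, zero_div, zero_pow two_ne_zero]
      positivity
    · have hle := hmin (m / e) hx₀
      rw [hroot, zero_div, zero_pow two_ne_zero, sq_nonpos_iff, div_eq_zero_iff,
        or_iff_left (sub_ne_zero.2 (Ne.symm hx)), sub_eq_zero] at hle
      exact eq_div_of_mul_eq he (by linarith)

section Quadratic

variable {a c d b : ℝ}

theorem quadratic_pos_of_sq_lt_mul (ha : 0 < a) (hgram : c ^ 2 < a * d) :
    0 < d * b ^ 2 - 2 * c * b + a := by
  have key : a * (d * b ^ 2 - 2 * c * b + a) = (a - c * b) ^ 2 + (a * d - c ^ 2) * b ^ 2 := by ring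
  rcases eq_or_ne b 0 with rfl | hb
  · simpa using ha
  · refine pos_of_mul_pos_right (key ▸ ?_) ha.le
    have : 0 < (a * d - c ^ 2) * b ^ 2 := by have := sub_pos.2 hgram; positivity
    positivity

theorem quadratic_div_sq_eq (hA : d * b ^ 2 - 2 * c * b + a ≠ 0) {x : ℝ} (hx : b * x ≠ 1) :
    (d - 2 * c * x + a * x ^ 2) / (1 - b * x) ^ 2 =
      (a * d - c ^ 2 + (((a - c * b) * x - (c - d * b)) / (1 - b * x)) ^ 2) /
        (d * b ^ 2 - 2 * c * b + a) := by
  have ht : (1 - b * x) ^ 2 ≠ 0 := pow_ne_zero 2 (sub_ne_zero.2 hx.symm)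
  rw [div_pow, add_div' _ _ _ ht, div_div, div_eq_div_iff ht (mul_ne_zero ht hA)]
  ring

theorem existsUnique_minimizer_quadratic_div_sq_iff (ha : 0 < a) (hgram : c ^ 2 < a * d) :
    (∃! x, b * x ≠ 1 ∧ ∀ y, b * y ≠ 1 →
        (d - 2 * c * x + a * x ^ 2) / (1 - b * x) ^ 2 ≤
          (d - 2 * c * y + a * y ^ 2) / (1 - b * y) ^ 2) ↔
      a - c * b ≠ 0 := by
  have hA := quadratic_pos_of_sq_lt_mul (b := b) ha hgram
  rw [← existsUnique_minimizer_sq_mobius_iff (m := c - d * b) (by linarith)]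
  refine existsUnique_congr fun x => and_congr_right fun hx =>
    forall_congr' fun y => imp_congr_right fun hy => ?_
  rw [quadratic_div_sq_eq hA.ne' hx, quadratic_div_sq_eq hA.ne' hy,
    div_le_div_iff_of_pos_right hA, add_le_add_iff_left]

end Quadratic

theorem stmt_15_general (N : ℕ) (Y1 Y2 : Fin N → ℝ)
    (hInd : LinearIndependent ℝ ![Y1, Y2]) (b12 : ℝ) :
    let f : ℝ → ℝ := fun b21 => (∑ i, (Y2 i - b21 * Y1 i) ^ 2) / (1 - b12 * b21) ^ 2
    (∃! b21 : ℝ, b12 * b21 ≠ 1 ∧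
        ∀ b' : ℝ, b12 * b' ≠ 1 → f b21 ≤ f b') ↔
      1 - b12 * ((∑ i, Y2 i * Y1 i) / (∑ i, (Y1 i) ^ 2)) ≠ 0 := by
  intro f
  obtain ⟨ha, hgram⟩ := sum_sq_pos_and_sq_sum_mul_lt_of_linearIndependent hInd
  have hrhs : 1 - b12 * ((∑ i, Y2 i * Y1 i) / ∑ i, Y1 i ^ 2) =
      (∑ i, Y1 i ^ 2 - (∑ i, Y2 i * Y1 i) * b12) / ∑ i, Y1 i ^ 2 := by
    field_simp
  simp only [f, sum_sub_mul_sq, hrhs, div_ne_zero_iff, ha.ne', ne_eq, not_false_eq_true, and_true]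
  exact existsUnique_minimizer_quadratic_div_sq_iff ha hgram

theorem stmt_15 (N : ℕ) (hN : 2 ≤ N) (Y1 Y2 : Fin N → ℝ)
    (hInd : LinearIndependent ℝ ![Y1, Y2]) (b12 : ℝ) :
    let f : ℝ → ℝ := fun b21 => (∑ i, (Y2 i - b21 * Y1 i) ^ 2) / (1 - b12 * b21) ^ 2
    (∃! b21 : ℝ, b12 * b21 ≠ 1 ∧
        ∀ b' : ℝ, b12 * b' ≠ 1 → f b21 ≤ f b') ↔
      1 - b12 * ((∑ i, Y2 i * Y1 i) / (∑ i, (Y1 i) ^ 2)) ≠ 0 :=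
  stmt_15_general N Y1 Y2 hInd b12
end
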